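/- Let ν ∈ ℝ^n be a unit vector, ε ∈ (0, π/2), and let (A_1, ..., A_r) ⊂ ℝ^n satisfy: (A) each segment [A_i A_r], i = 1, ..., r-1, makes angle at most ε with the axis x = span{ν}; (B) each segment [A_k A_{k+1}] that makes angle at most ε with x has projection on x of the same sign as that of [A_{r-1} A_r], i.e., writing x_k = (A_k - A_r)·ν, one has (x_{k+1} - x_k)(x_r - x_{r-1}) ≥ 0. Then (x_r - x_1)(x_r - x_{r-1}) ≥ 0 and ℓ_x(A_1, ..., A_r) ≤ |x_r - x_1| + 2·cot(ε)·ℓ_{x^⊥}(A_1, ..., A_r). -/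

import Mathlib

/-!
A vector `v` is `ε`-horizontal exactly when `⟪v, ν⟫ ≠ 0` and its component orthogonal to `ν`
has norm at most `tan ε · |⟪v, ν⟫|`, so each nappe of the horizontal double cone is a convex cone.
As every `A_i - A_r` is horizontal, a step `[A_k A_{k+1}]` across which `x` changes sign joins
opposite nappes and is therefore horizontal, so by (B) it moves like the last step: it can never
cross towards the side of `x_{r-1}`. Hence all `x_i`, `i < r`, have the sign of `x_{r-1}`.
With `s` the sign of the last step, horizontal steps have `|Δx| = s·Δx` and vertical ones
`|Δx| ≤ cot ε · |Δx^⊥| ≤ s·Δx + 2 cot ε · |Δx^⊥|`; summing, `s·Δx` telescopes to `s·(x_r - x_0)`.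
-/

open InnerProductGeometry

noncomputable def lineSubspaceAngle {n : ℕ} (v : EuclideanSpace ℝ (Fin n))
    (W : Submodule ℝ (EuclideanSpace ℝ (Fin n))) : ℝ :=
  sInf {θ : ℝ | ∃ w ∈ W, w ≠ 0 ∧ θ = InnerProductGeometry.angle v w}

open Real

section Axis

variable {E : Type*} [NormedAddCommGroup E] [InnerProductSpace ℝ E] {ν : E}

theorem norm_sq_eq_inner_sq_add_norm_sq_orthogonalProjectionOnto_orthogonal
    (hν : ‖ν‖ = 1) (v : E) :
    ‖v‖ ^ 2 = inner ℝ v ν ^ 2 + ‖(ℝ ∙ ν)ᗮ.orthogonalProjectionOnto v‖ ^ 2 := by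
  have hproj : ‖(ℝ ∙ ν).orthogonalProjectionOnto v‖ = |inner ℝ v ν| := by
    rw [Submodule.coe_norm, ← Submodule.starProjection_apply,
      Submodule.starProjection_unit_singleton ℝ hν, norm_smul, hν, mul_one,
      Real.norm_eq_abs, real_inner_comm]
  rw [Submodule.norm_sq_eq_add_norm_sq_projection v (ℝ ∙ ν), hproj, sq_abs]

end Axis

theorem cos_mul_le_abs_iff_le_tan_mul_abs {ε a b N : ℝ} (hε₀ : 0 < ε) (hε : ε < π / 2)
    (hb : 0 ≤ b) (hN : 0 ≤ N) (hpyth : N ^ 2 = a ^ 2 + b ^ 2) :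
    cos ε * N ≤ |a| ↔ b ≤ tan ε * |a| := by
  have hcos : 0 < cos ε := cos_pos_of_mem_Ioo ⟨by linarith, hε⟩
  have hsin : 0 < sin ε := sin_pos_of_pos_of_lt_pi hε₀ (by linarith [pi_pos])
  rw [tan_eq_sin_div_cos, div_mul_eq_mul_div, le_div_iff₀ hcos, mul_comm b,
    ← sq_le_sq₀ (mul_nonneg hcos.le hN) (abs_nonneg a),
    ← sq_le_sq₀ (mul_nonneg hcos.le hb) (mul_nonneg hsin.le (abs_nonneg a)),
    mul_pow, mul_pow, mul_pow, hpyth, sq_abs, sin_sq]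
  constructor <;> intro h <;> nlinarith

section Angle

variable {n : ℕ} {ν : EuclideanSpace ℝ (Fin n)} {ε : ℝ}

theorem lineSubspaceAngle_span_singleton (hν : ν ≠ 0) (v : EuclideanSpace ℝ (Fin n)) :
    lineSubspaceAngle v (ℝ ∙ ν) = min (angle v ν) (angle v (-ν)) := by
  have hset : {θ : ℝ | ∃ w ∈ ℝ ∙ ν, w ≠ 0 ∧ θ = angle v w} = {angle v ν, angle v (-ν)} := by
    ext θ
    simp only [Set.mem_ofPred_eq, Set.mem_insert_iff, Set.mem_singleton_iff]
    constructor
    · rintro ⟨w, hw, hw0, rfl⟩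
      obtain ⟨t, rfl⟩ := Submodule.mem_span_singleton.1 hw
      rcases (left_ne_zero_of_smul hw0).lt_or_gt with ht | ht
      · right
        rw [← neg_neg t, neg_smul, ← smul_neg, angle_smul_right_of_pos _ _ (neg_pos.2 ht)]
      · exact Or.inl (angle_smul_right_of_pos _ _ ht)
    · rintro (rfl | rfl)
      · exact ⟨ν, Submodule.mem_span_singleton_self ν, hν, rfl⟩
      · exact ⟨-ν, Submodule.neg_mem _ (Submodule.mem_span_singleton_self ν), neg_ne_zero.2 hν,
          rfl⟩
  rw [lineSubspaceAngle, hset, csInf_pair]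

theorem lineSubspaceAngle_span_singleton_le_iff_cos_le (hν : ν ≠ 0) (hε : ε ∈ Set.Icc 0 π)
    (v : EuclideanSpace ℝ (Fin n)) :
    lineSubspaceAngle v (ℝ ∙ ν) ≤ ε ↔ cos ε ≤ |inner ℝ v ν| / (‖v‖ * ‖ν‖) := by
  rw [lineSubspaceAngle_span_singleton hν, min_le_iff,
    ← strictAntiOn_cos.le_iff_ge hε ⟨angle_nonneg v ν, angle_le_pi v ν⟩,
    ← strictAntiOn_cos.le_iff_ge hε ⟨angle_nonneg v (-ν), angle_le_pi v (-ν)⟩,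
    cos_angle, cos_angle, inner_neg_right, norm_neg, neg_div, ← le_abs, abs_div,
    abs_of_nonneg (by positivity : 0 ≤ ‖v‖ * ‖ν‖)]

theorem lineSubspaceAngle_span_singleton_le_iff (hν : ‖ν‖ = 1) (hε₀ : 0 < ε) (hε : ε < π / 2)
    {v : EuclideanSpace ℝ (Fin n)} :
    lineSubspaceAngle v (ℝ ∙ ν) ≤ ε ↔
      inner ℝ v ν ≠ 0 ∧ ‖(ℝ ∙ ν)ᗮ.orthogonalProjectionOnto v‖ ≤ tan ε * |inner ℝ v ν| := by
  have hcos : 0 < cos ε := cos_pos_of_mem_Ioo ⟨by linarith, hε⟩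
  rw [lineSubspaceAngle_span_singleton_le_iff_cos_le (norm_ne_zero_iff.1 (by simp [hν]))
    ⟨hε₀.le, by linarith [pi_pos]⟩, hν, mul_one]
  rcases eq_or_ne (inner ℝ v ν) 0 with ha | ha
  · simpa [ha] using hcos
  · have hv : 0 < ‖v‖ := norm_pos_iff.2 fun hv ↦ ha (by simp [hv])
    rw [le_div_iff₀ hv, cos_mul_le_abs_iff_le_tan_mul_abs hε₀ hε (norm_nonneg _) hv.le
      (norm_sq_eq_inner_sq_add_norm_sq_orthogonalProjectionOnto_orthogonal hν v)]
    exact (and_iff_right ha).symm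

theorem abs_inner_le_cot_mul_of_not_lineSubspaceAngle_le (hν : ‖ν‖ = 1) (hε₀ : 0 < ε)
    (hε : ε < π / 2) {v : EuclideanSpace ℝ (Fin n)}
    (h : ¬ lineSubspaceAngle v (ℝ ∙ ν) ≤ ε) :
    |inner ℝ v ν| ≤ (tan ε)⁻¹ * ‖(ℝ ∙ ν)ᗮ.orthogonalProjectionOnto v‖ := by
  have htan : 0 < tan ε := tan_pos_of_pos_of_lt_pi_div_two hε₀ hε
  rw [lineSubspaceAngle_span_singleton_le_iff hν hε₀ hε, not_and, not_le] at h
  rcases eq_or_ne (inner ℝ v ν) 0 with ha | ha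
  · rw [ha, abs_zero]
    positivity
  · rw [inv_mul_eq_div, le_div_iff₀ htan]
    linarith [h ha]

theorem lineSubspaceAngle_sub_le_of_inner_mul_inner_neg (hν : ‖ν‖ = 1) (hε₀ : 0 < ε)
    (hε : ε < π / 2) {u w : EuclideanSpace ℝ (Fin n)}
    (hu : lineSubspaceAngle u (ℝ ∙ ν) ≤ ε) (hw : lineSubspaceAngle w (ℝ ∙ ν) ≤ ε)
    (h : inner ℝ u ν * inner ℝ w ν < 0) :
    lineSubspaceAngle (u - w) (ℝ ∙ ν) ≤ ε := by
  rw [lineSubspaceAngle_span_singleton_le_iff hν hε₀ hε] at hu hw ⊢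
  -- `u` and `-w` lie in the same nappe of the double cone, and each nappe is a convex cone.
  set a := inner ℝ u ν
  set b := inner ℝ w ν
  have hab : a ≠ b := fun hab ↦ by rw [hab] at h; exact (mul_self_nonneg b).not_gt h
  have habs : |a - b| = |a| + |b| := by
    rcases hu.1.lt_or_gt with ha | ha
    · rw [abs_of_neg (by nlinarith), abs_of_neg ha, abs_of_pos (by nlinarith)]; ring
    · rw [abs_of_pos (by nlinarith), abs_of_pos ha, abs_of_neg (by nlinarith)]; ring
  refine ⟨by rw [inner_sub_left]; exact sub_ne_zero.2 hab, ?_⟩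
  calc ‖(ℝ ∙ ν)ᗮ.orthogonalProjectionOnto (u - w)‖
      ≤ ‖(ℝ ∙ ν)ᗮ.orthogonalProjectionOnto u‖ + ‖(ℝ ∙ ν)ᗮ.orthogonalProjectionOnto w‖ := by
        rw [map_sub]; exact norm_sub_le _ _
    _ ≤ tan ε * |a| + tan ε * |b| := add_le_add hu.2 hw.2
    _ = tan ε * |inner ℝ (u - w) ν| := by rw [inner_sub_left, habs, mul_add]

end Angle

section Sequence

open Finset

theorem mul_last_pos_of_sign_changes_against {x : ℕ → ℝ} {m : ℕ} (hx : ∀ i ≤ m, x i ≠ 0)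
    (hchange : ∀ k < m, x k * x (k + 1) < 0 → (x (k + 1) - x k) * x m ≤ 0) :
    ∀ i ≤ m, 0 < x i * x m := by
  intro i hi
  induction hi using Nat.decreasingInduction with
  | self => exact mul_self_pos.2 (hx m le_rfl)
  | of_succ k hk ih =>
    by_contra hneg
    have hkm : x k * x m < 0 :=
      (not_lt.1 hneg).lt_of_ne (mul_ne_zero (hx k hk.le) (hx m le_rfl))
    have hchg : x k * x (k + 1) < 0 := by
      have := mul_neg_of_neg_of_pos hkm ih
      nlinarith [mul_self_pos.2 (hx m le_rfl)]
    nlinarith [hchange k hk hchg]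

theorem sum_abs_sub_le_abs_sub_add {x e : ℕ → ℝ} {σ : ℝ} {r : ℕ} (hσ : σ ≠ 0)
    (he : ∀ k < r, 0 ≤ e k)
    (hstep : ∀ k < r, 0 ≤ (x (k + 1) - x k) * σ ∨ |x (k + 1) - x k| ≤ e k) :
    ∑ k ∈ range r, |x (k + 1) - x k| ≤ |x r - x 0| + 2 * ∑ k ∈ range r, e k := by
  have hstep' : ∀ k ∈ range r,
      |x (k + 1) - x k| * |σ| ≤ (x (k + 1) - x k) * σ + 2 * e k * |σ| := by
    intro k hk
    have hek := he k (mem_range.1 hk)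
    rcases hstep k (mem_range.1 hk) with h | h
    · rw [← abs_mul, abs_of_nonneg h]
      nlinarith [abs_nonneg σ]
    · nlinarith [neg_abs_le ((x (k + 1) - x k) * σ), abs_mul (x (k + 1) - x k) σ, abs_nonneg σ]
  -- Multiplying by `|σ|` rather than dividing by `σ` avoids a case split on the sign of `σ`.
  refine le_of_mul_le_mul_right ?_ (abs_pos.2 hσ)
  calc (∑ k ∈ range r, |x (k + 1) - x k|) * |σ|
      ≤ ∑ k ∈ range r, ((x (k + 1) - x k) * σ + 2 * e k * |σ|) := by
        rw [sum_mul]; exact sum_le_sum hstep'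
    _ = (x r - x 0) * σ + 2 * (∑ k ∈ range r, e k) * |σ| := by
        rw [sum_add_distrib, ← sum_mul, sum_range_sub, ← sum_mul, ← mul_sum]
    _ ≤ (|x r - x 0| + 2 * ∑ k ∈ range r, e k) * |σ| := by
        nlinarith [le_abs_self ((x r - x 0) * σ), abs_mul (x r - x 0) σ]

end Sequence

/-- If every segment `[Aᵢ A_r]` is `ε`-horizontal with respect to the axis
`span{ν}` and every `ε`-horizontal step has `ν`-projection of the same sign as
the last step, then the first step also has that sign and
`ℓ_x ≤ |x_r - x_0| + 2·cot(ε)·ℓ_{x^⊥}`. -/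
theorem horizontal_direction_bound {n : ℕ}
    (ν : EuclideanSpace ℝ (Fin n)) (hν : ‖ν‖ = 1)
    (ε : ℝ) (hε : 0 < ε ∧ ε < Real.pi / 2)
    (r : ℕ) (hr : 1 ≤ r) (A : ℕ → EuclideanSpace ℝ (Fin n))
    (hA : ∀ i : ℕ, i < r →
      lineSubspaceAngle (A r - A i) (Submodule.span ℝ {ν}) ≤ ε)
    (hB : ∀ k : ℕ, k < r →
      lineSubspaceAngle (A (k + 1) - A k) (Submodule.span ℝ {ν}) ≤ ε →
      0 ≤ ((inner ℝ (A (k + 1) - A r) ν : ℝ) - (inner ℝ (A k - A r) ν : ℝ)) *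
        ((inner ℝ (A r - A r) ν : ℝ) - (inner ℝ (A (r - 1) - A r) ν : ℝ))) :
    0 ≤ ((inner ℝ (A r - A r) ν : ℝ) - (inner ℝ (A 0 - A r) ν : ℝ)) *
        ((inner ℝ (A r - A r) ν : ℝ) - (inner ℝ (A (r - 1) - A r) ν : ℝ)) ∧
    ∑ k ∈ Finset.range r,
        |(inner ℝ (A (k + 1) - A r) ν : ℝ) - (inner ℝ (A k - A r) ν : ℝ)| ≤
      |(inner ℝ (A r - A r) ν : ℝ) - (inner ℝ (A 0 - A r) ν : ℝ)| +
        2 * (Real.tan ε)⁻¹ *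
          ∑ k ∈ Finset.range r,
            ‖(Submodule.orthogonalProjection ((Submodule.span ℝ {ν})ᗮ) (A (k + 1)) :
                EuclideanSpace ℝ (Fin n)) -
              (Submodule.orthogonalProjection ((Submodule.span ℝ {ν})ᗮ) (A k) :
                EuclideanSpace ℝ (Fin n))‖ := by
  obtain ⟨hε₀, hε⟩ := hε
  have hlast : inner ℝ (A r - A r) ν = 0 := by simp
  have hneg : ∀ i, inner ℝ (A r - A i) ν = -inner ℝ (A i - A r) ν := fun i ↦ by
    rw [← inner_neg_left, neg_sub]
  have hstep : ∀ k, inner ℝ (A (k + 1) - A k) ν =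
      inner ℝ (A (k + 1) - A r) ν - inner ℝ (A k - A r) ν := fun k ↦ by
    rw [← inner_sub_left, sub_sub_sub_cancel_right]
  have hx_ne : ∀ i < r, inner ℝ (A i - A r) ν ≠ 0 := fun i hi ↦ by
    simpa [hneg] using ((lineSubspaceAngle_span_singleton_le_iff hν hε₀ hε).1 (hA i hi)).1
  have hcross : ∀ k < r - 1, inner ℝ (A k - A r) ν * inner ℝ (A (k + 1) - A r) ν < 0 →
      lineSubspaceAngle (A (k + 1) - A k) (Submodule.span ℝ {ν}) ≤ ε := fun k hk hchange ↦ by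
    rw [← sub_sub_sub_cancel_left _ _ (A r)]
    exact lineSubspaceAngle_sub_le_of_inner_mul_inner_neg hν hε₀ hε (hA k (by omega))
      (hA (k + 1) (by omega)) (by simpa [hneg] using hchange)
  have hsign := mul_last_pos_of_sign_changes_against (x := fun i ↦ inner ℝ (A i - A r) ν)
    (m := r - 1) (fun i hi ↦ hx_ne i (by omega)) fun k hk hchange ↦ by
      have hmove := hB k (by omega) (hcross k hk hchange)
      rw [hlast] at hmove
      linarith
  refine ⟨by rw [hlast]; nlinarith [hsign 0 (Nat.zero_le _)], ?_⟩
  rw [mul_assoc, Finset.mul_sum]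
  refine sum_abs_sub_le_abs_sub_add (x := fun i ↦ inner ℝ (A i - A r) ν)
    (σ := inner ℝ (A r - A r) ν - inner ℝ (A (r - 1) - A r) ν)
    (by rw [hlast, zero_sub, neg_ne_zero]; exact hx_ne _ (by omega))
    (fun k _ ↦ mul_nonneg (inv_nonneg.2 (tan_pos_of_pos_of_lt_pi_div_two hε₀ hε).le)
      (norm_nonneg _))
    fun k hk ↦ ?_
  by_cases hhor : lineSubspaceAngle (A (k + 1) - A k) (Submodule.span ℝ {ν}) ≤ ε
  · exact Or.inl (hB k hk hhor)
  · have hvert := abs_inner_le_cot_mul_of_not_lineSubspaceAngle_le hν hε₀ hε hhor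
    rw [hstep, map_sub, Submodule.coe_norm, Submodule.coe_sub] at hvert
    exact Or.inr hvert
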